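/- (Theorem: noise is additive over independent subsystems.) Let A, B, A', B' be pairwise disjoint systems in the universe U with priming bijections f : A → A' and g : B → B', and let the priming on A ∪ B be the common extension of f and g. Suppose the joint systems A ∪ A' and B ∪ B' are informationally independent, i.e. H(A ∪ A' ∪ B ∪ B') = H(A ∪ A') + H(B ∪ B'), and that I on the full system A ∪ A' ∪ B ∪ B' is nonnegative. Then for every scale k ≥ 1, the noise complexity of the whole system is the sum of the noise complexities of the subsystems: C_{A'∪B'|A∪B}(k) = C_{A'|A}(k) + C_{B'|B}(k). -/
import Mathlib


open Finset

variable {U : Type*}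

/-- `I` solves the defining linear system of the information function of the system `A`
(with entropy function `H`): for every nonempty `B ⊆ A`, the sum of `I S` over all
nonempty `S ⊆ A` with `S ∩ B ≠ ∅` equals `H B`. -/
def IsInfoFn [DecidableEq U] (H : Finset U → ℝ) (A : Finset U) (I : Finset U → ℝ) : Prop :=
  ∀ B : Finset U, B ⊆ A → B.Nonempty →
    ∑ S ∈ A.powerset.filter (fun S => S.Nonempty ∧ (S ∩ B).Nonempty), I S = H B

/-- The complexity of the system `A` at scale `k` (with information function `I`):
the sum of `I S` over all nonempty `S ⊆ A` with `|S| ≥ k`. -/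
def complexityAt (A : Finset U) (I : Finset U → ℝ) (k : ℕ) : ℝ :=
  ∑ S ∈ A.powerset.filter (fun S => S.Nonempty ∧ k ≤ S.card), I S

/-- Conditional information `I(f(S)|S)` of a dependency `S` of `A`, relative to the primed
system `A'` with priming map `f`, computed with the information function `IJ` of the joint
system `A ∪ A'`: the sum of `IJ T` over all nonempty `T ⊆ A ∪ A'` with `T ∩ A' = f(S)`
and `T ∩ A ≠ S`. -/
def condInfo [DecidableEq U] (A A' : Finset U) (f : U → U) (IJ : Finset U → ℝ)
    (S : Finset U) : ℝ :=
  ∑ T ∈ (A ∪ A').powerset.filter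
      (fun T => T.Nonempty ∧ T ∩ A' = S.image f ∧ T ∩ A ≠ S), IJ T

/-- The noise complexity `C_{A'|A}(k)`: the sum of the conditional informations
`I(f(S)|S)` over all nonempty `S ⊆ A` with `|S| ≥ k`. -/
def noiseComplexityAt [DecidableEq U] (A A' : Finset U) (f : U → U) (IJ : Finset U → ℝ)
    (k : ℕ) : ℝ :=
  ∑ S ∈ A.powerset.filter (fun S => S.Nonempty ∧ k ≤ S.card), condInfo A A' f IJ S

lemma sum_filter_or_and' {α : Type*} (s : Finset α) (p q : α → Prop)
    [DecidablePred p] [DecidablePred q] (f : α → ℝ) :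
    ∑ x ∈ s.filter p, f x + ∑ x ∈ s.filter q, f x
      = ∑ x ∈ s.filter (fun x => p x ∨ q x), f x
        + ∑ x ∈ s.filter (fun x => p x ∧ q x), f x := by
  simp only [Finset.sum_filter, ← Finset.sum_add_distrib]
  refine Finset.sum_congr rfl fun x _ => ?_
  by_cases hp : p x <;> by_cases hq : q x <;> simp [hp, hq]

lemma infoFn_unique' [DecidableEq U] {H : Finset U → ℝ} {A : Finset U}
    {I₁ I₂ : Finset U → ℝ} (h1 : IsInfoFn H A I₁) (h2 : IsInfoFn H A I₂) :
    ∀ S, S ⊆ A → S.Nonempty → I₁ S = I₂ S := by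
  have hJ : ∀ B : Finset U, B ⊆ A → B.Nonempty →
      ∑ S ∈ A.powerset.filter (fun S => S.Nonempty ∧ (S ∩ B).Nonempty),
        (I₁ S - I₂ S) = 0 := by
    intro B hB hBne
    rw [Finset.sum_sub_distrib, h1 B hB hBne, h2 B hB hBne, sub_self]
  have hF : ∀ C : Finset U, C ⊆ A →
      ∑ S ∈ C.powerset.filter (fun S => S.Nonempty), (I₁ S - I₂ S) = 0 := by
    have hFA : A.Nonempty →
        ∑ S ∈ A.powerset.filter (fun S => S.Nonempty), (I₁ S - I₂ S) = 0 := by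
      intro hA
      rw [← hJ A Finset.Subset.rfl hA]
      apply Finset.sum_congr _ (fun _ _ => rfl)
      apply Finset.filter_congr
      intro S hS
      rw [Finset.mem_powerset] at hS
      rw [Finset.inter_eq_left.mpr hS]
      simp
    intro C hC
    by_cases hCA : C = A
    · subst hCA
      rcases C.eq_empty_or_nonempty with h | h
      · subst h; simp [Finset.filter_singleton]
      · exact hFA h
    · have hB : (A \ C).Nonempty := by
        rw [Finset.sdiff_nonempty]
        intro h; exact hCA (Finset.Subset.antisymm hC h)
      have hA : A.Nonempty := hB.mono Finset.sdiff_subset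
      have hsplit := Finset.sum_filter_add_sum_filter_not
        (A.powerset.filter (fun S => S.Nonempty))
        (fun S => (S ∩ (A \ C)).Nonempty) (fun S => I₁ S - I₂ S)
      rw [Finset.filter_filter, Finset.filter_filter] at hsplit
      rw [hJ (A \ C) Finset.sdiff_subset hB, hFA hA, zero_add] at hsplit
      rw [← hsplit]
      apply Finset.sum_congr _ (fun _ _ => rfl)
      ext T
      simp only [Finset.mem_filter, Finset.mem_powerset, Finset.not_nonempty_iff_eq_empty]
      constructor
      · rintro ⟨hTC, hTne⟩
        refine ⟨hTC.trans hC, hTne, ?_⟩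
        rw [Finset.eq_empty_iff_forall_notMem]
        intro x hx
        rw [Finset.mem_inter, Finset.mem_sdiff] at hx
        exact hx.2.2 (hTC hx.1)
      · rintro ⟨hTA, hTne, hTempty⟩
        refine ⟨?_, hTne⟩
        intro x hx
        by_contra hxC
        have : x ∈ T ∩ (A \ C) := Finset.mem_inter.mpr ⟨hx, Finset.mem_sdiff.mpr ⟨hTA hx, hxC⟩⟩
        rw [hTempty] at this
        exact absurd this (Finset.notMem_empty x)
  intro S
  induction S using Finset.strongInductionOn with
  | _ S ih =>
    intro hSA hSne
    have hFS := hF S hSA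
    have hSmem : S ∈ S.powerset.filter (fun T => T.Nonempty) := by
      simp [Finset.mem_filter, hSne]
    rw [← Finset.sum_erase_add _ _ hSmem] at hFS
    have hrest : ∑ T ∈ (S.powerset.filter (fun T => T.Nonempty)).erase S,
        (I₁ T - I₂ T) = 0 := by
      apply Finset.sum_eq_zero
      intro T hT
      rw [Finset.mem_erase, Finset.mem_filter, Finset.mem_powerset] at hT
      obtain ⟨hTS, hTsub, hTne⟩ := hT
      rw [ih T (Finset.ssubset_iff_subset_ne.mpr ⟨hTsub, hTS⟩) (hTsub.trans hSA) hTne]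
      ring
    rw [hrest, zero_add, sub_eq_zero] at hFS
    exact hFS

lemma inter_empty_of_subset_union' [DecidableEq U] {T X Y Z : Finset U} (h : T ⊆ X ∪ Y)
    (h1 : Disjoint X Z) (h2 : Disjoint Y Z) : T ∩ Z = ∅ := by
  rw [Finset.eq_empty_iff_forall_notMem]
  intro x hx
  rw [Finset.mem_inter] at hx
  rcases Finset.mem_union.mp (h hx.1) with hh | hh
  · exact Finset.disjoint_left.mp h1 hh hx.2
  · exact Finset.disjoint_left.mp h2 hh hx.2

/-- noise is additive over independent subsystems. Let `A, B, A', B'` be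
pairwise disjoint systems with priming bijections `f : A → A'` and `g : B → B'`, and let
the priming `e` on `A ∪ B` be the common extension of `f` and `g`.  If the joint systems
`A ∪ A'` and `B ∪ B'` are informationally independent
(`H(A ∪ A' ∪ B ∪ B') = H(A ∪ A') + H(B ∪ B')`) and the information function of the full
system is nonnegative, then for every scale `k ≥ 1`:
`C_{A'∪B'|A∪B}(k) = C_{A'|A}(k) + C_{B'|B}(k)`. -/
theorem noiseComplexity_add_of_independent [Fintype U] [DecidableEq U]
    (H : Finset U → ℝ) (A B A' B' : Finset U)
    (hAB : Disjoint A B) (hAA' : Disjoint A A') (hAB' : Disjoint A B')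
    (hBA' : Disjoint B A') (hBB' : Disjoint B B') (hA'B' : Disjoint A' B')
    (f g e : U → U)
    (hf : Set.BijOn f ↑A ↑A') (hg : Set.BijOn g ↑B ↑B')
    (hef : ∀ a ∈ A, e a = f a) (heg : ∀ b ∈ B, e b = g b)
    (hindep : H ((A ∪ B) ∪ (A' ∪ B')) = H (A ∪ A') + H (B ∪ B'))
    (IJ : Finset U → ℝ) (hIJ : IsInfoFn H ((A ∪ B) ∪ (A' ∪ B')) IJ)
    (hnn : ∀ T : Finset U, T ⊆ (A ∪ B) ∪ (A' ∪ B') → T.Nonempty → 0 ≤ IJ T)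
    (IJA : Finset U → ℝ) (hIJA : IsInfoFn H (A ∪ A') IJA)
    (IJB : Finset U → ℝ) (hIJB : IsInfoFn H (B ∪ B') IJB)
    (k : ℕ) (hk : 1 ≤ k) :
    noiseComplexityAt (A ∪ B) (A' ∪ B') e IJ k =
      noiseComplexityAt A A' f IJA k + noiseComplexityAt B B' g IJB k := by
  set full : Finset U := (A ∪ B) ∪ (A' ∪ B') with hfull_def
  have hPQ : full = (A ∪ A') ∪ (B ∪ B') := by
    rw [hfull_def]; ext x; simp only [Finset.mem_union]; tauto
  have hPQ' : (A ∪ B) ∪ (A' ∪ B') = (A ∪ A') ∪ (B ∪ B') := by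
    ext x; simp only [Finset.mem_union]; tauto
  have hPsub : A ∪ A' ⊆ full := by rw [hPQ]; exact Finset.subset_union_left
  have hQsub : B ∪ B' ⊆ full := by rw [hPQ]; exact Finset.subset_union_right
  -- cross terms vanish
  have hcross : ∀ T : Finset U, T ⊆ full → (T ∩ (A ∪ A')).Nonempty →
      (T ∩ (B ∪ B')).Nonempty → IJ T = 0 := by
    intro T hT hTP hTQ
    have hP : (A ∪ A').Nonempty := by
      obtain ⟨x, hx⟩ := hTP; exact ⟨x, (Finset.mem_inter.mp hx).2⟩
    have hQ : (B ∪ B').Nonempty := by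
      obtain ⟨x, hx⟩ := hTQ; exact ⟨x, (Finset.mem_inter.mp hx).2⟩
    have hfne : full.Nonempty := by
      obtain ⟨x, hx⟩ := hP; exact ⟨x, hPsub hx⟩
    have h1 := hIJ (A ∪ A') hPsub hP
    have h2 := hIJ (B ∪ B') hQsub hQ
    have h3 := hIJ full Finset.Subset.rfl hfne
    have hIE := sum_filter_or_and' (full.powerset.filter (fun S => S.Nonempty))
      (fun S => (S ∩ (A ∪ A')).Nonempty) (fun S => (S ∩ (B ∪ B')).Nonempty) IJ
    rw [Finset.filter_filter, Finset.filter_filter, Finset.filter_filter,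
      Finset.filter_filter] at hIE
    have hor : full.powerset.filter
          (fun S => S.Nonempty ∧ ((S ∩ (A ∪ A')).Nonempty ∨ (S ∩ (B ∪ B')).Nonempty))
        = full.powerset.filter (fun S => S.Nonempty ∧ (S ∩ full).Nonempty) := by
      apply Finset.filter_congr
      intro S hS
      rw [Finset.mem_powerset] at hS
      rw [Finset.inter_eq_left.mpr hS]
      constructor
      · rintro ⟨h, _⟩; exact ⟨h, h⟩
      · rintro ⟨h, -⟩
        refine ⟨h, ?_⟩
        have : (S ∩ ((A ∪ A') ∪ (B ∪ B'))).Nonempty := by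
          rw [← hPQ, Finset.inter_eq_left.mpr hS]; exact h
        rw [Finset.inter_union_distrib_left] at this
        obtain ⟨y, hy⟩ := this
        rw [Finset.mem_union] at hy
        rcases hy with h' | h'
        · exact Or.inl ⟨y, h'⟩
        · exact Or.inr ⟨y, h'⟩
    rw [h1, h2, hor, h3, hindep] at hIE
    have hzero : ∑ x ∈ full.powerset.filter
        (fun S => S.Nonempty ∧ (S ∩ (A ∪ A')).Nonempty ∧ (S ∩ (B ∪ B')).Nonempty),
        IJ x = 0 := by linarith
    have hall := (Finset.sum_eq_zero_iff_of_nonneg ?_).mp hzero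
    · apply hall
      rw [Finset.mem_filter, Finset.mem_powerset]
      obtain ⟨y, hy⟩ := hTP
      exact ⟨hT, ⟨y, (Finset.mem_inter.mp hy).1⟩, ⟨y, hy⟩, hTQ⟩
    · intro S hS
      rw [Finset.mem_filter, Finset.mem_powerset] at hS
      exact hnn S hS.1 hS.2.1
  -- IJ agrees with IJA on A ∪ A'
  have hIJP : IsInfoFn H (A ∪ A') IJ := by
    intro C hC hCne
    rw [← hIJ C (hC.trans hPsub) hCne]
    apply Finset.sum_subset
    · intro T hT
      rw [Finset.mem_filter, Finset.mem_powerset] at hT ⊢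
      exact ⟨hT.1.trans hPsub, hT.2⟩
    · intro T hT hTn
      rw [Finset.mem_filter, Finset.mem_powerset] at hT
      obtain ⟨hTfull, hTne, hTC⟩ := hT
      by_cases hTP : T ⊆ A ∪ A'
      · exact absurd (Finset.mem_filter.mpr ⟨Finset.mem_powerset.mpr hTP, hTne, hTC⟩) hTn
      · obtain ⟨x, hxT, hxP⟩ := Finset.not_subset.mp hTP
        have hxQ : x ∈ B ∪ B' := by
          have := hTfull hxT
          rw [hPQ, Finset.mem_union] at this
          tauto
        apply hcross T hTfull
        · obtain ⟨y, hy⟩ := hTC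
          rw [Finset.mem_inter] at hy
          exact ⟨y, Finset.mem_inter.mpr ⟨hy.1, hC hy.2⟩⟩
        · exact ⟨x, Finset.mem_inter.mpr ⟨hxT, hxQ⟩⟩
  have hIJQ : IsInfoFn H (B ∪ B') IJ := by
    intro C hC hCne
    rw [← hIJ C (hC.trans hQsub) hCne]
    apply Finset.sum_subset
    · intro T hT
      rw [Finset.mem_filter, Finset.mem_powerset] at hT ⊢
      exact ⟨hT.1.trans hQsub, hT.2⟩
    · intro T hT hTn
      rw [Finset.mem_filter, Finset.mem_powerset] at hT
      obtain ⟨hTfull, hTne, hTC⟩ := hT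
      by_cases hTQ : T ⊆ B ∪ B'
      · exact absurd (Finset.mem_filter.mpr ⟨Finset.mem_powerset.mpr hTQ, hTne, hTC⟩) hTn
      · obtain ⟨x, hxT, hxQ⟩ := Finset.not_subset.mp hTQ
        have hxP : x ∈ A ∪ A' := by
          have := hTfull hxT
          rw [hPQ, Finset.mem_union] at this
          tauto
        apply hcross T hTfull
        · exact ⟨x, Finset.mem_inter.mpr ⟨hxT, hxP⟩⟩
        · obtain ⟨y, hy⟩ := hTC
          rw [Finset.mem_inter] at hy
          exact ⟨y, Finset.mem_inter.mpr ⟨hy.1, hC hy.2⟩⟩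
  have hIJAeq := infoFn_unique' hIJP hIJA
  have hIJBeq := infoFn_unique' hIJQ hIJB
  -- mixed dependencies contribute nothing
  have hmixed : ∀ S : Finset U, S ⊆ A ∪ B → (S ∩ A).Nonempty → (S ∩ B).Nonempty →
      condInfo (A ∪ B) (A' ∪ B') e IJ S = 0 := by
    intro S hS hSA hSB
    apply Finset.sum_eq_zero
    intro T hT
    rw [Finset.mem_filter, Finset.mem_powerset] at hT
    obtain ⟨hTfull, hTne, hTA', hTA⟩ := hT
    apply hcross T hTfull
    · obtain ⟨a, ha⟩ := hSA
      rw [Finset.mem_inter] at ha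
      have hea : e a ∈ T ∩ (A' ∪ B') := by
        rw [hTA']; exact Finset.mem_image_of_mem e ha.1
      have hfa : e a ∈ A' := by
        rw [hef a ha.2]
        exact Finset.mem_coe.mp (hf.mapsTo (Finset.mem_coe.mpr ha.2))
      exact ⟨e a, Finset.mem_inter.mpr ⟨(Finset.mem_inter.mp hea).1,
        Finset.mem_union_right _ hfa⟩⟩
    · obtain ⟨b, hb⟩ := hSB
      rw [Finset.mem_inter] at hb
      have heb : e b ∈ T ∩ (A' ∪ B') := by
        rw [hTA']; exact Finset.mem_image_of_mem e hb.1
      have hgb : e b ∈ B' := by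
        rw [heg b hb.2]
        exact Finset.mem_coe.mp (hg.mapsTo (Finset.mem_coe.mpr hb.2))
      exact ⟨e b, Finset.mem_inter.mpr ⟨(Finset.mem_inter.mp heb).1,
        Finset.mem_union_right _ hgb⟩⟩
  -- dependencies inside A
  have hcaseA : ∀ S : Finset U, S ⊆ A → S.Nonempty →
      condInfo (A ∪ B) (A' ∪ B') e IJ S = condInfo A A' f IJA S := by
    intro S hSA hSne
    have himg : S.image e = S.image f := Finset.image_congr (fun x hx => hef x (hSA hx))
    have hFsub : S.image f ⊆ A' := by
      intro y hy
      obtain ⟨x, hx, rfl⟩ := Finset.mem_image.mp hy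
      exact Finset.mem_coe.mp (hf.mapsTo (Finset.mem_coe.mpr (hSA hx)))
    have hFne : (S.image f).Nonempty := hSne.image f
    unfold condInfo
    rw [himg]
    have hIJAsum : ∑ T ∈ (A ∪ A').powerset.filter
          (fun T => T.Nonempty ∧ T ∩ A' = S.image f ∧ T ∩ A ≠ S), IJA T
        = ∑ T ∈ (A ∪ A').powerset.filter
          (fun T => T.Nonempty ∧ T ∩ A' = S.image f ∧ T ∩ A ≠ S), IJ T := by
      apply Finset.sum_congr rfl
      intro T hT
      rw [Finset.mem_filter, Finset.mem_powerset] at hT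
      exact (hIJAeq T hT.1 hT.2.1).symm
    rw [hIJAsum]
    symm
    apply Finset.sum_subset
    · intro T hT
      rw [Finset.mem_filter, Finset.mem_powerset] at hT ⊢
      obtain ⟨hTP, hTne, hTA', hTA⟩ := hT
      have hTB' : T ∩ B' = ∅ := inter_empty_of_subset_union' hTP hAB' hA'B'
      have hTB : T ∩ B = ∅ := inter_empty_of_subset_union' hTP hAB hBA'.symm
      refine ⟨hTP.trans hPsub, hTne, ?_, ?_⟩
      · rw [Finset.inter_union_distrib_left, hTA', hTB', Finset.union_empty]
      · rw [Finset.inter_union_distrib_left, hTB, Finset.union_empty]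
        exact hTA
    · intro T hT hTn
      rw [Finset.mem_filter, Finset.mem_powerset] at hT
      obtain ⟨hTfull, hTne, hTA', hTA⟩ := hT
      by_cases hTP : T ⊆ A ∪ A'
      · exfalso
        apply hTn
        rw [Finset.mem_filter, Finset.mem_powerset]
        have hTB' : T ∩ B' = ∅ := inter_empty_of_subset_union' hTP hAB' hA'B'
        have hTB : T ∩ B = ∅ := inter_empty_of_subset_union' hTP hAB hBA'.symm
        rw [Finset.inter_union_distrib_left, hTB', Finset.union_empty] at hTA'
        rw [Finset.inter_union_distrib_left, hTB, Finset.union_empty] at hTA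
        exact ⟨hTP, hTne, hTA', hTA⟩
      · obtain ⟨x, hxT, hxP⟩ := Finset.not_subset.mp hTP
        have hxQ : x ∈ B ∪ B' := by
          have := hTfull hxT
          rw [hPQ', Finset.mem_union] at this
          tauto
        apply hcross T hTfull
        · obtain ⟨y, hy⟩ := hFne
          have hyT : y ∈ T := by
            have : y ∈ T ∩ (A' ∪ B') := by rw [hTA']; exact hy
            exact (Finset.mem_inter.mp this).1
          exact ⟨y, Finset.mem_inter.mpr ⟨hyT, Finset.mem_union_right _ (hFsub hy)⟩⟩
        · exact ⟨x, Finset.mem_inter.mpr ⟨hxT, hxQ⟩⟩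
  -- dependencies inside B
  have hcaseB : ∀ S : Finset U, S ⊆ B → S.Nonempty →
      condInfo (A ∪ B) (A' ∪ B') e IJ S = condInfo B B' g IJB S := by
    intro S hSB hSne
    have himg : S.image e = S.image g := Finset.image_congr (fun x hx => heg x (hSB hx))
    have hFsub : S.image g ⊆ B' := by
      intro y hy
      obtain ⟨x, hx, rfl⟩ := Finset.mem_image.mp hy
      exact Finset.mem_coe.mp (hg.mapsTo (Finset.mem_coe.mpr (hSB hx)))
    have hFne : (S.image g).Nonempty := hSne.image g
    unfold condInfo
    rw [himg]
    have hIJBsum : ∑ T ∈ (B ∪ B').powerset.filter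
          (fun T => T.Nonempty ∧ T ∩ B' = S.image g ∧ T ∩ B ≠ S), IJB T
        = ∑ T ∈ (B ∪ B').powerset.filter
          (fun T => T.Nonempty ∧ T ∩ B' = S.image g ∧ T ∩ B ≠ S), IJ T := by
      apply Finset.sum_congr rfl
      intro T hT
      rw [Finset.mem_filter, Finset.mem_powerset] at hT
      exact (hIJBeq T hT.1 hT.2.1).symm
    rw [hIJBsum]
    symm
    apply Finset.sum_subset
    · intro T hT
      rw [Finset.mem_filter, Finset.mem_powerset] at hT ⊢
      obtain ⟨hTQ, hTne, hTB', hTB⟩ := hT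
      have hTA' : T ∩ A' = ∅ := inter_empty_of_subset_union' hTQ hBA' hA'B'.symm
      have hTA : T ∩ A = ∅ := inter_empty_of_subset_union' hTQ hAB.symm hAB'.symm
      refine ⟨hTQ.trans hQsub, hTne, ?_, ?_⟩
      · rw [Finset.inter_union_distrib_left, hTA', hTB', Finset.empty_union]
      · rw [Finset.inter_union_distrib_left, hTA, Finset.empty_union]
        exact hTB
    · intro T hT hTn
      rw [Finset.mem_filter, Finset.mem_powerset] at hT
      obtain ⟨hTfull, hTne, hTB', hTB⟩ := hT
      by_cases hTQ : T ⊆ B ∪ B'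
      · exfalso
        apply hTn
        rw [Finset.mem_filter, Finset.mem_powerset]
        have hTA' : T ∩ A' = ∅ := inter_empty_of_subset_union' hTQ hBA' hA'B'.symm
        have hTA : T ∩ A = ∅ := inter_empty_of_subset_union' hTQ hAB.symm hAB'.symm
        rw [Finset.inter_union_distrib_left, hTA', Finset.empty_union] at hTB'
        rw [Finset.inter_union_distrib_left, hTA, Finset.empty_union] at hTB
        exact ⟨hTQ, hTne, hTB', hTB⟩
      · obtain ⟨x, hxT, hxQ⟩ := Finset.not_subset.mp hTQ
        have hxP : x ∈ A ∪ A' := by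
          have := hTfull hxT
          rw [hPQ', Finset.mem_union] at this
          tauto
        apply hcross T hTfull
        · exact ⟨x, Finset.mem_inter.mpr ⟨hxT, hxP⟩⟩
        · obtain ⟨y, hy⟩ := hFne
          have hyT : y ∈ T := by
            have : y ∈ T ∩ (A' ∪ B') := by rw [hTB']; exact hy
            exact (Finset.mem_inter.mp this).1
          exact ⟨y, Finset.mem_inter.mpr ⟨hyT, Finset.mem_union_right _ (hFsub hy)⟩⟩
  -- assemble
  unfold noiseComplexityAt
  rw [← Finset.sum_filter_add_sum_filter_not
      ((A ∪ B).powerset.filter (fun S => S.Nonempty ∧ k ≤ S.card)) (fun S => S ⊆ A)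
      (condInfo (A ∪ B) (A' ∪ B') e IJ)]
  rw [← Finset.sum_filter_add_sum_filter_not
      (((A ∪ B).powerset.filter (fun S => S.Nonempty ∧ k ≤ S.card)).filter
        (fun S => ¬ S ⊆ A)) (fun S => S ⊆ B)
      (condInfo (A ∪ B) (A' ∪ B') e IJ)]
  have hzero3 : ∑ S ∈ ((((A ∪ B).powerset.filter (fun S => S.Nonempty ∧ k ≤ S.card)).filter
      (fun S => ¬ S ⊆ A)).filter (fun S => ¬ S ⊆ B)),
      condInfo (A ∪ B) (A' ∪ B') e IJ S = 0 := by
    apply Finset.sum_eq_zero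
    intro S hS
    simp only [Finset.mem_filter, Finset.mem_powerset] at hS
    obtain ⟨⟨⟨hSsub, hSne, -⟩, hnA⟩, hnB⟩ := hS
    apply hmixed S hSsub
    · obtain ⟨x, hxS, hxB⟩ := Finset.not_subset.mp hnB
      have hxA : x ∈ A := by
        rcases Finset.mem_union.mp (hSsub hxS) with h | h
        · exact h
        · exact absurd h hxB
      exact ⟨x, Finset.mem_inter.mpr ⟨hxS, hxA⟩⟩
    · obtain ⟨x, hxS, hxA⟩ := Finset.not_subset.mp hnA
      have hxB : x ∈ B := by
        rcases Finset.mem_union.mp (hSsub hxS) with h | h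
        · exact absurd h hxA
        · exact h
      exact ⟨x, Finset.mem_inter.mpr ⟨hxS, hxB⟩⟩
  rw [hzero3, add_zero]
  congr 1
  · have hset : ((A ∪ B).powerset.filter (fun S => S.Nonempty ∧ k ≤ S.card)).filter
        (fun S => S ⊆ A) = A.powerset.filter (fun S => S.Nonempty ∧ k ≤ S.card) := by
      ext S
      simp only [Finset.mem_filter, Finset.mem_powerset]
      constructor
      · rintro ⟨⟨-, h⟩, hA⟩; exact ⟨hA, h⟩
      · rintro ⟨hA, h⟩; exact ⟨⟨hA.trans Finset.subset_union_left, h⟩, hA⟩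
    rw [hset]
    apply Finset.sum_congr rfl
    intro S hS
    rw [Finset.mem_filter, Finset.mem_powerset] at hS
    exact hcaseA S hS.1 hS.2.1
  · have hset : (((A ∪ B).powerset.filter (fun S => S.Nonempty ∧ k ≤ S.card)).filter
        (fun S => ¬ S ⊆ A)).filter (fun S => S ⊆ B)
        = B.powerset.filter (fun S => S.Nonempty ∧ k ≤ S.card) := by
      ext S
      simp only [Finset.mem_filter, Finset.mem_powerset]
      constructor
      · rintro ⟨⟨⟨-, h⟩, -⟩, hB⟩; exact ⟨hB, h⟩
      · rintro ⟨hB, hne, h⟩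
        refine ⟨⟨⟨hB.trans Finset.subset_union_right, hne, h⟩, ?_⟩, hB⟩
        intro hSA
        obtain ⟨x, hx⟩ := hne
        exact Finset.disjoint_left.mp hAB (hSA hx) (hB hx)
    rw [hset]
    apply Finset.sum_congr rfl
    intro S hS
    rw [Finset.mem_filter, Finset.mem_powerset] at hS
    exact hcaseB S hS.1 hS.2.1
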